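/- Let S be a finite semilattice indecomposable semigroup with zero z. Let S' be the semigroup obtained from S by adjoining a new element z' with z'x = xz' = z for all x ∈ S and (z')² = z. Then S' is a semilattice indecomposable semigroup with |S'| = |S| + 1. -/

import Mathlib

universe u

/-- A semigroup is semilattice indecomposable if every semigroup homomorphism from it to a
semilattice (a commutative idempotent semigroup) is constant. -/
def SemilatticeIndecomposable (S : Type u) [Semigroup S] : Prop :=
  ∀ (T : Type u) [Semigroup T],
    (∀ a b : T, a * b = b * a) → (∀ a : T, a * a = a) →
      ∀ f : S →ₙ* T, ∀ x y : S, f x = f y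

section Adjoin

variable {S : Type u} [Semigroup S]

/-- Multiplication on `S' = S ∪ {z'}` (with `z'` represented by `none`):
it extends the multiplication of `S`, and `z' x = x z' = z` for all `x ∈ S`
as well as `z'² = z`. -/
def adjMul (z : S) : Option S → Option S → Option S
  | some a, some b => some (a * b)
  | _, _ => some z

theorem adjMul_assoc (z : S) (hz : ∀ x : S, z * x = z ∧ x * z = z)
    (x y w : Option S) : adjMul z (adjMul z x y) w = adjMul z x (adjMul z y w) := by
  rcases x with _ | a <;> rcases y with _ | b <;> rcases w with _ | c <;>
    simp [adjMul, (hz _).1, (hz _).2, mul_assoc]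

/-- `S' = S ∪ {z'}` is a semigroup when `z` is a zero of `S`. -/
def adjSemigroup (z : S) (hz : ∀ x : S, z * x = z ∧ x * z = z) :
    Semigroup (Option S) where
  mul := adjMul z
  mul_assoc := adjMul_assoc z hz

end Adjoin

namespace SemilatticeIndecomposable

variable {S : Type u} [Semigroup S] (z : S) (hz : ∀ x : S, z * x = z ∧ x * z = z)

/-- A homomorphism into a semilattice sends `z'` where it sends `z'² = z ∈ S`. -/
theorem adjSemigroup (hS : SemilatticeIndecomposable S) :
    @SemilatticeIndecomposable (Option S) (adjSemigroup z hz) := by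
  let _ := _root_.adjSemigroup z hz
  intro T _ hcomm hidem f
  have hsome (a b : S) : f (some a) = f (some b) :=
    hS T hcomm hidem ⟨fun s ↦ f (some s), fun a b ↦ map_mul f (some a) (some b)⟩ a b
  have hnone : f none = f (some z) := by
    rw [← hidem (f none), ← map_mul]
    rfl
  rintro (_ | a) (_ | b)
  · rfl
  · rw [hnone, hsome]
  · rw [hnone, hsome]
  · exact hsome a b

end SemilatticeIndecomposable

/-- If `S` is a finite semilattice indecomposable semigroup with zero `z`, then the semigroup
`S'` obtained by adjoining a new element `z'` with `z'x = xz' = (z')² = z` is a semilattice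
indecomposable semigroup with `|S'| = |S| + 1`. -/
theorem stmt_13 {S : Type u} [Semigroup S] [Fintype S]
    (hS : SemilatticeIndecomposable S)
    (z : S) (hz : ∀ x : S, z * x = z ∧ x * z = z) :
    @SemilatticeIndecomposable (Option S) (adjSemigroup z hz) ∧
      Fintype.card (Option S) = Fintype.card S + 1 :=
  ⟨hS.adjSemigroup z hz, Fintype.card_option⟩
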